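/- Let 1 ≤ m ≤ n and 1 ≤ k ≤ C(n,m). Then the isoperimetric function of the Johnson graph J(n,m) satisfies μ_{n,m}(k) ≤ f(k,n,m). -/

import Mathlib

open Finset

/-- The set of vertices of the Johnson graph `J(n,m)`: the `m`-element subsets of
`[n] = {0, …, n-1}`. -/
def johnsonVerts (n m : ℕ) : Finset (Finset ℕ) :=
  (Finset.range n).powersetCard m

/-- The (vertex) boundary of a set `S` of vertices in the Johnson graph `J(n,m)`:
the vertices outside `S` whose symmetric difference with some member of `S` has
cardinality `2`. -/
def boundary (n m : ℕ) (S : Finset (Finset ℕ)) : Finset (Finset ℕ) :=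
  (johnsonVerts n m).filter fun y => y ∉ S ∧ ∃ x ∈ S, (symmDiff x y).card = 2

/-- The ball of a set `S` of vertices in the Johnson graph `J(n,m)`. -/
def ball (n m : ℕ) (S : Finset (Finset ℕ)) : Finset (Finset ℕ) :=
  S ∪ boundary n m S

/-- The initial segment of length `k` in the colex order on `m`-element subsets of
`[n]`: the `m`-subsets `s` such that fewer than `k` of the `m`-subsets are
colex-smaller than `s`. -/
def colexInitSeg (n m k : ℕ) : Finset (Finset ℕ) :=
  (johnsonVerts n m).filter fun s =>
    ((johnsonVerts n m).filter fun t =>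
      toColex t < toColex s).card < k

/-- The isoperimetric function `μ_{n,m}(k)` of the Johnson graph `J(n,m)`:
the smallest boundary cardinality among sets of `k` vertices. -/
noncomputable def mu (n m k : ℕ) : ℕ :=
  sInf {b | ∃ S : Finset (Finset ℕ),
    S ⊆ johnsonVerts n m ∧ S.card = k ∧ (boundary n m S).card = b}

/-- The lower shadow of a family `S` of `m`-element subsets of `[n]`:
the `(m-1)`-subsets contained in some member of `S`. -/
def lowShadow (n m : ℕ) (S : Finset (Finset ℕ)) : Finset (Finset ℕ) :=
  ((Finset.range n).powersetCard (m - 1)).filter fun t => ∃ s ∈ S, t ⊆ s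

/-- The upper shadow of a family `S` of `c`-element subsets of `[n]`:
the `(c+1)`-subsets of `[n]` containing some member of `S`. -/
def upShadow' (n c : ℕ) (S : Finset (Finset ℕ)) : Finset (Finset ℕ) :=
  ((Finset.range n).powersetCard (c + 1)).filter fun t => ∃ s ∈ S, s ⊆ t

/-- The shift `T_{ij}` applied to a single set `x` of the family `S`. -/
def shiftFun (i j : ℕ) (S : Finset (Finset ℕ)) (x : Finset ℕ) : Finset ℕ :=
  if i ∈ x ∧ j ∉ x ∧ insert j (x.erase i) ∉ S then insert j (x.erase i) else x

/-- The shift `T_{ij}(S)` of a family `S`. -/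
def shift (i j : ℕ) (S : Finset (Finset ℕ)) : Finset (Finset ℕ) :=
  S.image (shiftFun i j S)

/-- `ks 0 > ks 1 > ⋯ > ks r ≥ m - r > 0` and `k = ∑_{i=0}^{r} C(ks i, m - i)`:
the `m`-binomial representation of `k`. -/
def IsMBinomialRep (m k r : ℕ) (ks : ℕ → ℕ) : Prop :=
  (∀ i < r, ks (i + 1) < ks i) ∧ m - r ≤ ks r ∧ r < m ∧
    k = ∑ i ∈ Finset.range (r + 1), (ks i).choose (m - i)

/-- The function `f(k,n,m)` computed from the `m`-binomial representation
`k = ∑_{i=0}^{r} C(ks i, m - i)`: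
`f = C(ks 0, m-1)·(n - ks 0) + ∑_{i=1}^{r} (C(ks i, m-i-1)·(n - ks 0 - 1) - C(ks i, m-i))`. -/
def fVal (n m r : ℕ) (ks : ℕ → ℕ) : ℤ :=
  ((ks 0).choose (m - 1) : ℤ) * ((n : ℤ) - ks 0) +
    ∑ i ∈ Finset.Icc 1 r,
      (((ks i).choose (m - i - 1) : ℤ) * ((n : ℤ) - ks 0 - 1) - ((ks i).choose (m - i) : ℤ))

/-- The generalized binomial coefficient `C(x, j) = x(x-1)⋯(x-j+1)/j!` for an
integer `x` (the division is exact). -/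
def genChoose (x : ℤ) (j : ℕ) : ℤ :=
  (∏ i ∈ Finset.range j, (x - i)) / (j.factorial : ℤ)

/-!
Write `k = ∑_{i ≤ r} C(kᵢ, m - i)` and `Aᵢ = {k₀, …, k_{i-1}}`. The first `k` sets in colex
order form the disjoint union `S` of the blocks `Sᵢ = {Aᵢ ∪ B : B ⊆ [kᵢ], |B| = m - i}`, so it
suffices to bound `|∂S|`. A neighbour `y ∉ S` of `x ∈ S` trades one element of `x` for a new one.
If `y` has at most one element `≥ k₀`, it lies in `S₀` or in the layer `T₀` of sets with `m - 1`
elements below `k₀` and one in `[k₀, n)`. Otherwise `y` keeps `k₀` and gains a new element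
`c > k₀`, and it lies in `Tⱼ = {Aⱼ ∪ P ∪ {c} : P ⊆ [kⱼ], |P| = m - j - 1, k₀ < c < n}` for some
`1 ≤ j ≤ r`. As `S₁, …, S_r ⊆ T₀`, this gives
`|∂S| ≤ |T₀| - ∑_{i ≥ 1} |Sᵢ| + ∑_{j ≥ 1} |Tⱼ| ≤ f(k, n, m)`.
-/

theorem exists_eq_insert_erase_of_card_symmDiff_eq_two {α : Type*} [DecidableEq α]
    {x y : Finset α} (hcard : x.card = y.card) (h : (symmDiff x y).card = 2) :
    ∃ a ∈ x, ∃ b ∉ x, y = insert b (x.erase a) := by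
  rw [symmDiff_def, sup_eq_union, card_union_of_disjoint disjoint_sdiff_sdiff] at h
  have hxy := card_sdiff_add_card_inter x y
  have hyx := card_sdiff_add_card_inter y x
  rw [inter_comm] at hyx
  obtain ⟨a, ha⟩ := card_eq_one.mp (show (x \ y).card = 1 by omega)
  obtain ⟨b, hb⟩ := card_eq_one.mp (show (y \ x).card = 1 by omega)
  have hxa (z : α) : z ∈ x ∧ z ∉ y ↔ z = a := by simpa using Finset.ext_iff.mp ha z
  have hyb (z : α) : z ∈ y ∧ z ∉ x ↔ z = b := by simpa using Finset.ext_iff.mp hb z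
  refine ⟨a, ((hxa a).2 rfl).1, b, ((hyb b).2 rfl).2, ext fun z => ?_⟩
  rw [mem_insert, mem_erase]
  grind

def headSet (ks : ℕ → ℕ) (i : ℕ) : Finset ℕ :=
  (range i).image ks

def colexBlock (m : ℕ) (ks : ℕ → ℕ) (i : ℕ) : Finset (Finset ℕ) :=
  ((range (ks i)).powersetCard (m - i)).image (headSet ks i ∪ ·)

def colexFamily (m r : ℕ) (ks : ℕ → ℕ) : Finset (Finset ℕ) :=
  (range (r + 1)).biUnion (colexBlock m ks)

def boundaryLayer (n m : ℕ) (ks : ℕ → ℕ) : Finset (Finset ℕ) :=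
  ((range (ks 0)).powersetCard (m - 1) ×ˢ Ico (ks 0) n).image fun p => insert p.2 p.1

def boundaryBlock (n m : ℕ) (ks : ℕ → ℕ) (i : ℕ) : Finset (Finset ℕ) :=
  ((range (ks i)).powersetCard (m - i - 1) ×ˢ Ico (ks 0 + 1) n).image
    fun p => insert p.2 (headSet ks i ∪ p.1)

section HeadSet

variable {r i : ℕ} {ks : ℕ → ℕ}

theorem mem_headSet {z : ℕ} : z ∈ headSet ks i ↔ ∃ j < i, ks j = z := by
  simp [headSet]

theorem card_headSet (hks : StrictAntiOn ks (Set.Iic r)) (hi : i ≤ r) :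
    (headSet ks i).card = i := by
  rw [headSet, card_image_of_injOn, card_range]
  exact hks.injOn.mono fun j hj => Set.mem_Iic.mpr (by rw [coe_range, Set.mem_Iio] at hj; omega)

theorem le_of_mem_headSet (hks : StrictAntiOn ks (Set.Iic r)) (hi : i ≤ r) {z : ℕ}
    (hz : z ∈ headSet ks i) : z ≤ ks 0 := by
  obtain ⟨j, hj, rfl⟩ := mem_headSet.mp hz
  exact hks.antitoneOn (Nat.zero_le r) (Set.mem_Iic.mpr (by omega)) (Nat.zero_le j)

theorem disjoint_headSet_range (hks : StrictAntiOn ks (Set.Iic r)) (hi : i ≤ r) :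
    Disjoint (headSet ks i) (range (ks i)) := by
  rw [disjoint_left]
  rintro _ hz
  obtain ⟨j, hj, rfl⟩ := mem_headSet.mp hz
  simpa using (hks (Set.mem_Iic.mpr (by omega)) hi hj).le

end HeadSet

section ColexBlock

variable {m r i : ℕ} {ks : ℕ → ℕ} {x : Finset ℕ}

theorem mem_colexBlock :
    x ∈ colexBlock m ks i ↔ ∃ B ⊆ range (ks i), B.card = m - i ∧ headSet ks i ∪ B = x := by
  simp [colexBlock, mem_powersetCard, and_assoc]

theorem headSet_subset_of_mem_colexBlock (hx : x ∈ colexBlock m ks i) : headSet ks i ⊆ x := by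
  obtain ⟨B, -, -, rfl⟩ := mem_colexBlock.mp hx
  exact subset_union_left

theorem card_colexBlock (hks : StrictAntiOn ks (Set.Iic r)) (hi : i ≤ r) :
    (colexBlock m ks i).card = (ks i).choose (m - i) := by
  rw [colexBlock, card_image_of_injOn, card_powersetCard, card_range]
  intro B₁ hB₁ B₂ hB₂ h
  rw [mem_coe, mem_powersetCard] at hB₁ hB₂
  have hd := disjoint_headSet_range hks hi
  rw [← union_sdiff_cancel_left (hd.mono_right hB₁.1),
    ← union_sdiff_cancel_left (hd.mono_right hB₂.1)]
  exact congrArg (· \ headSet ks i) h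

theorem card_of_mem_colexBlock (hks : StrictAntiOn ks (Set.Iic r)) (hi : i ≤ r) (him : i ≤ m)
    (hx : x ∈ colexBlock m ks i) : x.card = m := by
  obtain ⟨B, hB, hBc, rfl⟩ := mem_colexBlock.mp hx
  rw [card_union_of_disjoint ((disjoint_headSet_range hks hi).mono_right hB), card_headSet hks hi,
    hBc]
  omega

theorem le_of_mem_colexBlock (hks : StrictAntiOn ks (Set.Iic r)) (hi : i ≤ r)
    (hx : x ∈ colexBlock m ks i) : ∀ z ∈ x, z ≤ ks 0 := by
  obtain ⟨B, hB, -, rfl⟩ := mem_colexBlock.mp hx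
  intro z hz
  rcases mem_union.mp hz with hz | hz
  · exact le_of_mem_headSet hks hi hz
  · exact (mem_range.mp (hB hz)).le.trans (hks.antitoneOn (Nat.zero_le r) hi (Nat.zero_le i))

theorem disjoint_colexBlock (hks : StrictAntiOn ks (Set.Iic r)) {j : ℕ} (hij : i < j)
    (hj : j ≤ r) : Disjoint (colexBlock m ks i) (colexBlock m ks j) := by
  rw [disjoint_left]
  intro x hxi hxj
  have hmem : ks i ∈ x := headSet_subset_of_mem_colexBlock hxj (mem_headSet.mpr ⟨i, hij, rfl⟩)
  obtain ⟨B, hB, -, rfl⟩ := mem_colexBlock.mp hxi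
  rcases mem_union.mp hmem with h | h
  · obtain ⟨l, hl, hle⟩ := mem_headSet.mp h
    exact (hks (Set.mem_Iic.mpr (by omega)) (Set.mem_Iic.mpr (by omega)) hl).ne hle.symm
  · exact (mem_range.mp (hB h)).false

theorem pairwiseDisjoint_colexBlock (hks : StrictAntiOn ks (Set.Iic r)) :
    (Set.Iic r).PairwiseDisjoint (colexBlock m ks) := by
  intro i hi j hj hij
  rcases hij.lt_or_gt with h | h
  · exact disjoint_colexBlock hks h hj
  · exact (disjoint_colexBlock hks h hi).symm

theorem colexBlock_zero : colexBlock m ks 0 = (range (ks 0)).powersetCard m := by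
  simp [colexBlock, headSet]

end ColexBlock

section BoundaryCover

variable {n m r i : ℕ} {ks : ℕ → ℕ}

theorem card_boundaryLayer_le :
    (boundaryLayer n m ks).card ≤ (ks 0).choose (m - 1) * (n - ks 0) :=
  card_image_le.trans_eq <| by rw [card_product, card_powersetCard, card_range, Nat.card_Ico]

theorem card_boundaryBlock_le :
    (boundaryBlock n m ks i).card ≤ (ks i).choose (m - i - 1) * (n - (ks 0 + 1)) :=
  card_image_le.trans_eq <| by rw [card_product, card_powersetCard, card_range, Nat.card_Ico]

theorem mem_boundaryLayer_of {y : Finset ℕ} (hy : y ⊆ range n) (hcard : y.card = m) {c : ℕ}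
    (hc : c ∈ y) (hck : ks 0 ≤ c) (hrest : ∀ z ∈ y, z ≠ c → z < ks 0) :
    y ∈ boundaryLayer n m ks := by
  refine mem_image.mpr ⟨(y.erase c, c), mem_product.mpr ⟨mem_powersetCard.mpr ⟨?_, ?_⟩, ?_⟩,
    insert_erase hc⟩
  · exact fun z hz => mem_range.mpr (hrest z (mem_of_mem_erase hz) (ne_of_mem_erase hz))
  · rw [card_erase_of_mem hc, hcard]
  · exact mem_Ico.mpr ⟨hck, mem_range.mp (hy hc)⟩

theorem insert_mem_boundaryBlock (hks : StrictAntiOn ks (Set.Iic r)) (hi : i ≤ r)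
    {w : Finset ℕ} (hA : headSet ks i ⊆ w) (hw : ∀ z ∈ w, z ∉ headSet ks i → z < ks i)
    (hcard : w.card = m - 1) {c : ℕ} (hc0 : ks 0 < c) (hcn : c < n) :
    insert c w ∈ boundaryBlock n m ks i := by
  refine mem_image.mpr ⟨(w \ headSet ks i, c), mem_product.mpr ⟨mem_powersetCard.mpr ⟨?_, ?_⟩, ?_⟩,
    by rw [union_sdiff_of_subset hA]⟩
  · intro z hz
    rw [mem_sdiff] at hz
    exact mem_range.mpr (hw z hz.1 hz.2)
  · rw [card_sdiff_of_subset hA, hcard, card_headSet hks hi]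
    omega
  · exact mem_Ico.mpr ⟨hc0, hcn⟩

theorem colexBlock_subset_boundaryLayer (hks : StrictAntiOn ks (Set.Iic r)) (hi : 1 ≤ i)
    (hir : i ≤ r) (him : i ≤ m) (hn : ks 0 < n) : colexBlock m ks i ⊆ boundaryLayer n m ks := by
  intro x hx
  have hle := le_of_mem_colexBlock hks hir hx
  exact mem_boundaryLayer_of (fun z hz => mem_range.mpr ((hle z hz).trans_lt hn))
    (card_of_mem_colexBlock hks hir him hx)
    (headSet_subset_of_mem_colexBlock hx (mem_headSet.mpr ⟨0, hi, rfl⟩)) le_rfl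
    fun z hz hz0 => (hle z hz).lt_of_ne hz0

theorem mem_colexBlock_zero_or_mem_boundaryLayer {y : Finset ℕ} (hy : y ⊆ range n)
    (hcard : y.card = m) (huniq : ∀ z ∈ y, ∀ z' ∈ y, ks 0 ≤ z → ks 0 ≤ z' → z = z') :
    y ∈ colexBlock m ks 0 ∨ y ∈ boundaryLayer n m ks := by
  by_cases h : ∃ c ∈ y, ks 0 ≤ c
  · obtain ⟨c, hc, hck⟩ := h
    exact .inr <| mem_boundaryLayer_of hy hcard hc hck fun z hz hzc =>
      not_le.mp fun hz0 => hzc (huniq z hz c hc hz0 hck)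
  · push Not at h
    rw [colexBlock_zero]
    exact .inl <| mem_powersetCard.mpr ⟨fun z hz => mem_range.mpr (h z hz), hcard⟩

theorem exists_headSet_subset_erase (hks : StrictAntiOn ks (Set.Iic r)) (hir : i ≤ r)
    {x : Finset ℕ} (hx : x ∈ colexBlock m ks i) {a : ℕ} (h0 : ks 0 ∈ x.erase a) :
    ∃ j ∈ Icc 1 i, headSet ks j ⊆ x.erase a ∧ ∀ z ∈ x.erase a, z ∉ headSet ks j → z < ks j := by
  obtain ⟨B, hB, -, rfl⟩ := mem_colexBlock.mp hx
  have ha0 : a ≠ ks 0 := (ne_of_mem_erase h0).symm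
  by_cases ha : a ∈ headSet ks i
  · obtain ⟨j, hji, rfl⟩ := mem_headSet.mp ha
    have hj : j ≠ 0 := by rintro rfl; exact ha0 rfl
    refine ⟨j, mem_Icc.mpr ⟨by omega, hji.le⟩, fun z hz => ?_, fun z hz hzj => ?_⟩
    · obtain ⟨l, hl, rfl⟩ := mem_headSet.mp hz
      exact mem_erase.mpr ⟨(hks (Set.mem_Iic.mpr (by omega)) (Set.mem_Iic.mpr (by omega)) hl).ne',
        mem_union_left _ (mem_headSet.mpr ⟨l, by omega, rfl⟩)⟩
    · obtain ⟨hza, hz⟩ := mem_erase.mp hz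
      rcases mem_union.mp hz with hz | hz
      · obtain ⟨l, hl, rfl⟩ := mem_headSet.mp hz
        have hjl : j < l := by
          by_contra! hlj
          rcases hlj.lt_or_eq with hlj | rfl
          · exact hzj (mem_headSet.mpr ⟨l, hlj, rfl⟩)
          · exact hza rfl
        exact hks (Set.mem_Iic.mpr (by omega)) (Set.mem_Iic.mpr (by omega)) hjl
      · exact (mem_range.mp (hB hz)).trans_le
          (hks.antitoneOn (Set.mem_Iic.mpr (by omega)) hir hji.le)
  · have hi : i ≠ 0 := by
      rintro rfl
      rw [show headSet ks 0 = ∅ from rfl, empty_union] at h0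
      exact (mem_range.mp (hB (mem_of_mem_erase h0))).false
    refine ⟨i, mem_Icc.mpr ⟨by omega, le_rfl⟩,
      fun z hz => mem_erase.mpr ⟨fun hza => ha (hza ▸ hz), mem_union_left _ hz⟩,
      fun z hz hzi => ?_⟩
    rcases mem_union.mp (mem_of_mem_erase hz) with hz | hz
    · exact absurd hz hzi
    · exact mem_range.mp (hB hz)

theorem boundary_colexFamily_subset (hks : StrictAntiOn ks (Set.Iic r)) (hrm : r < m) :
    boundary n m (colexFamily m r ks) ⊆
      (boundaryLayer n m ks \ colexFamily m r ks) ∪ (Icc 1 r).biUnion (boundaryBlock n m ks) := by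
  intro y hy
  rw [boundary, mem_filter, johnsonVerts, mem_powersetCard] at hy
  obtain ⟨⟨hyn, hym⟩, hyS, x, hxS, hxy⟩ := hy
  obtain ⟨i, hi, hxi⟩ := mem_biUnion.mp hxS
  have hir : i ≤ r := Nat.lt_succ_iff.mp (mem_range.mp hi)
  have hxm := card_of_mem_colexBlock hks hir (by omega) hxi
  obtain ⟨a, ha, b, hb, rfl⟩ :=
    exists_eq_insert_erase_of_card_symmDiff_eq_two (hxm.trans hym.symm) hxy
  by_cases hnew : ks 0 ∈ x.erase a ∧ ks 0 < b
  · obtain ⟨j, hj, hA, hrest⟩ := exists_headSet_subset_erase hks hir hxi hnew.1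
    have hj := mem_Icc.mp hj
    exact mem_union_right _ <| mem_biUnion.mpr ⟨j, mem_Icc.mpr ⟨hj.1, hj.2.trans hir⟩,
      insert_mem_boundaryBlock hks (hj.2.trans hir) hA hrest
        (by rw [card_erase_of_mem ha, hxm]) hnew.2 (mem_range.mp (hyn (mem_insert_self b _)))⟩
  · have hle := le_of_mem_colexBlock hks hir hxi
    have hbig : ∀ z ∈ insert b (x.erase a), ks 0 ≤ z → z = b ∨ (z = ks 0 ∧ ks 0 ∈ x.erase a) := by
      intro z hz hz0
      rcases mem_insert.mp hz with rfl | hz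
      · exact .inl rfl
      · have := hle z (mem_of_mem_erase hz)
        exact .inr ⟨by omega, by rwa [show ks 0 = z by omega]⟩
    have huniq : ∀ z ∈ insert b (x.erase a), ∀ z' ∈ insert b (x.erase a),
        ks 0 ≤ z → ks 0 ≤ z' → z = z' := by
      intro z hz z' hz' h h'
      rcases hbig z hz h with h | h <;> rcases hbig z' hz' h' with h' | h' <;> grind
    rcases mem_colexBlock_zero_or_mem_boundaryLayer hyn hym huniq with h | h
    · exact absurd (mem_biUnion.mpr ⟨0, by simp, h⟩) hyS
    · exact mem_union_left _ (mem_sdiff.mpr ⟨h, hyS⟩)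

end BoundaryCover

theorem le_of_choose_le_choose {a b m : ℕ} (hm : 0 < m) (ha : m ≤ a)
    (h : a.choose m ≤ b.choose m) : a ≤ b := by
  by_contra! hba
  have hpos := Nat.choose_pos ha
  have hmb : m ≤ b := by
    by_contra! hbm
    rw [Nat.choose_eq_zero_of_lt hbm] at h
    omega
  have hsucc : (b + 1).choose m = b.choose (m - 1) + b.choose m := by
    simpa [Nat.sub_add_cancel hm] using Nat.choose_succ_succ' b (m - 1)
  have := Nat.choose_le_choose m (show b + 1 ≤ a by omega)
  have := Nat.choose_pos (show m - 1 ≤ b by omega)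
  omega

namespace IsMBinomialRep

variable {n m k r : ℕ} {ks : ℕ → ℕ}

theorem strictAntiOn (h : IsMBinomialRep m k r ks) : StrictAntiOn ks (Set.Iic r) :=
  strictAntiOn_Iic_of_succ_lt h.1

theorem sub_le (h : IsMBinomialRep m k r ks) {i : ℕ} (hi : i ≤ r) : m - i ≤ ks i := by
  suffices ∀ d ≤ r, m - (r - d) ≤ ks (r - d) by
    simpa [Nat.sub_sub_self hi] using this (r - i) (Nat.sub_le r i)
  intro d
  induction d with
  | zero => exact fun _ => h.2.1
  | succ d ih =>
    intro hd
    have := h.1 (r - (d + 1)) (by omega)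
    rw [show r - (d + 1) + 1 = r - d by omega] at this
    have := ih (by omega)
    omega

theorem choose_le (h : IsMBinomialRep m k r ks) : (ks 0).choose m ≤ k := by
  rw [h.2.2.2]
  exact single_le_sum (f := fun i => (ks i).choose (m - i)) (fun _ _ => Nat.zero_le _)
    (mem_range.mpr (Nat.succ_pos r))

theorem choose_add_choose_le (h : IsMBinomialRep m k r ks) (hr : 1 ≤ r) :
    (ks 0).choose m + (ks 1).choose (m - 1) ≤ k := by
  rw [h.2.2.2]
  calc (ks 0).choose m + (ks 1).choose (m - 1)
      = ∑ i ∈ {0, 1}, (ks i).choose (m - i) := by simp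
    _ ≤ _ := sum_le_sum_of_subset fun i hi => by
      rw [mem_insert, mem_singleton] at hi
      exact mem_range.mpr (by omega)

theorem le_of_le_choose (h : IsMBinomialRep m k r ks) (hkn : k ≤ n.choose m) : ks 0 ≤ n :=
  le_of_choose_le_choose (Nat.zero_lt_of_lt h.2.2.1) (by simpa using h.sub_le (Nat.zero_le r))
    (h.choose_le.trans hkn)

theorem lt_of_le_choose (h : IsMBinomialRep m k r ks) (hkn : k ≤ n.choose m) (hr : 1 ≤ r) :
    ks 0 < n := by
  refine (h.le_of_le_choose hkn).lt_of_ne fun h0 => ?_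
  have := h.choose_add_choose_le hr
  have := Nat.choose_pos (h.sub_le hr)
  rw [h0] at *
  omega

theorem card_colexFamily (h : IsMBinomialRep m k r ks) : (colexFamily m r ks).card = k := by
  rw [colexFamily, card_biUnion, h.2.2.2]
  · exact sum_congr rfl fun i hi =>
      card_colexBlock h.strictAntiOn (Nat.lt_succ_iff.mp (mem_range.mp hi))
  · exact (pairwiseDisjoint_colexBlock h.strictAntiOn).subset fun i hi =>
      Set.mem_Iic.mpr (Nat.lt_succ_iff.mp (mem_range.mp hi))

theorem colexFamily_subset_johnsonVerts (h : IsMBinomialRep m k r ks) (hkn : k ≤ n.choose m) :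
    colexFamily m r ks ⊆ johnsonVerts n m := by
  intro x hx
  obtain ⟨i, hi, hxi⟩ := mem_biUnion.mp hx
  have hir : i ≤ r := Nat.lt_succ_iff.mp (mem_range.mp hi)
  refine mem_powersetCard.mpr ⟨fun z hz => mem_range.mpr ?_,
    card_of_mem_colexBlock h.strictAntiOn hir (by have := h.2.2.1; omega) hxi⟩
  rcases Nat.eq_zero_or_pos r with rfl | hr
  · rw [nonpos_iff_eq_zero.mp hir, colexBlock_zero, mem_powersetCard] at hxi
    exact (mem_range.mp (hxi.1 hz)).trans_le (h.le_of_le_choose hkn)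
  · exact (le_of_mem_colexBlock h.strictAntiOn hir hxi z hz).trans_lt (h.lt_of_le_choose hkn hr)

theorem card_boundaryLayer_sdiff_add_le (h : IsMBinomialRep m k r ks) (hkn : k ≤ n.choose m) :
    (boundaryLayer n m ks \ colexFamily m r ks).card + ∑ i ∈ Icc 1 r, (ks i).choose (m - i) ≤
      (ks 0).choose (m - 1) * (n - ks 0) := by
  have hsub : (Icc 1 r).biUnion (colexBlock m ks) ⊆
      boundaryLayer n m ks ∩ colexFamily m r ks := by
    intro x hx
    obtain ⟨i, hi, hxi⟩ := mem_biUnion.mp hx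
    have hi := mem_Icc.mp hi
    exact mem_inter.mpr ⟨colexBlock_subset_boundaryLayer h.strictAntiOn hi.1 hi.2
      (hi.2.trans h.2.2.1.le) (h.lt_of_le_choose hkn (hi.1.trans hi.2)) hxi,
      mem_biUnion.mpr ⟨i, mem_range.mpr (by omega), hxi⟩⟩
  have hcard : ((Icc 1 r).biUnion (colexBlock m ks)).card =
      ∑ i ∈ Icc 1 r, (ks i).choose (m - i) := by
    rw [card_biUnion ((pairwiseDisjoint_colexBlock h.strictAntiOn).subset
      fun i hi => (mem_Icc.mp hi).2)]
    exact sum_congr rfl fun i hi => card_colexBlock h.strictAntiOn (mem_Icc.mp hi).2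
  have := card_le_card hsub
  have := card_sdiff_add_card_inter (boundaryLayer n m ks) (colexFamily m r ks)
  have := card_boundaryLayer_le (n := n) (m := m) (ks := ks)
  omega

theorem card_boundary_colexFamily_le (h : IsMBinomialRep m k r ks) (hkn : k ≤ n.choose m) :
    ((boundary n m (colexFamily m r ks)).card : ℤ) ≤ fVal n m r ks := by
  have hcover : (boundary n m (colexFamily m r ks)).card ≤
      (boundaryLayer n m ks \ colexFamily m r ks).card +
        ∑ i ∈ Icc 1 r, (boundaryBlock n m ks i).card :=
    (card_le_card (boundary_colexFamily_subset h.strictAntiOn h.2.2.1)).trans <|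
      (card_union_le _ _).trans (Nat.add_le_add_left card_biUnion_le _)
  have hlayer : ((boundaryLayer n m ks \ colexFamily m r ks).card : ℤ) ≤
      (ks 0).choose (m - 1) * ((n : ℤ) - ks 0) - ∑ i ∈ Icc 1 r, ((ks i).choose (m - i) : ℤ) := by
    have := h.card_boundaryLayer_sdiff_add_le hkn
    zify [h.le_of_le_choose hkn] at this
    linarith
  have hblock : ∀ i ∈ Icc 1 r, ((boundaryBlock n m ks i).card : ℤ) ≤
      (ks i).choose (m - i - 1) * ((n : ℤ) - ks 0 - 1) := by
    intro i hi
    have hn : ks 0 + 1 ≤ n := h.lt_of_le_choose hkn ((mem_Icc.mp hi).1.trans (mem_Icc.mp hi).2)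
    have := card_boundaryBlock_le (n := n) (m := m) (ks := ks) (i := i)
    zify [hn] at this
    linarith
  calc ((boundary n m (colexFamily m r ks)).card : ℤ)
      ≤ (boundaryLayer n m ks \ colexFamily m r ks).card +
          ∑ i ∈ Icc 1 r, ((boundaryBlock n m ks i).card : ℤ) := by exact_mod_cast hcover
    _ ≤ ((ks 0).choose (m - 1) * ((n : ℤ) - ks 0) - ∑ i ∈ Icc 1 r, ((ks i).choose (m - i) : ℤ)) +
          ∑ i ∈ Icc 1 r, (ks i).choose (m - i - 1) * ((n : ℤ) - ks 0 - 1) :=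
      add_le_add hlayer (sum_le_sum hblock)
    _ = fVal n m r ks := by rw [fVal, sum_sub_distrib]; ring

end IsMBinomialRep

theorem mu_le_fVal_general
    (n m k r : ℕ) (ks : ℕ → ℕ)
    (hkn : k ≤ n.choose m)
    (hrep : IsMBinomialRep m k r ks) :
    (mu n m k : ℤ) ≤ fVal n m r ks := by
  have hmu : mu n m k ≤ (boundary n m (colexFamily m r ks)).card :=
    Nat.sInf_le ⟨_, hrep.colexFamily_subset_johnsonVerts hkn, hrep.card_colexFamily, rfl⟩
  exact (Nat.cast_le.mpr hmu).trans (hrep.card_boundary_colexFamily_le hkn)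

/-- For `1 ≤ m ≤ n` and `1 ≤ k ≤ C(n,m)`, the isoperimetric
function of `J(n,m)` satisfies `μ_{n,m}(k) ≤ f(k,n,m)`, where
`k = ∑_{i=0}^{r} C(ks i, m-i)` is the `m`-binomial representation of `k`. -/
theorem mu_le_fVal
    (n m k r : ℕ) (ks : ℕ → ℕ)
    (hm : 1 ≤ m) (hmn : m ≤ n) (hk : 1 ≤ k) (hkn : k ≤ n.choose m)
    (hrep : IsMBinomialRep m k r ks) :
    (mu n m k : ℤ) ≤ fVal n m r ks :=
  mu_le_fVal_general n m k r ks hkn hrep
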